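/- For every positive integer n, ρ(n) ≤ χ_μ(S(K_n)) ≤ χ_{μ_i}(S(K_n)) ≤ ρ(n)+1, where S(K_n) is the subdivision graph of the complete graph K_n and ρ(n) is the minimum number of parts in a partition of the edge set of K_n such that each part induces a K_4-free subgraph. -/

import Mathlib

open SimpleGraph

variable {V W : Type*}

/-- Two vertices of `X` are `X`-visible if some geodesic between them has all
internal vertices outside `X`; `X` is a mutual-visibility set if this holds
for every reachable pair of vertices of `X`. -/
def IsMVSet (G : SimpleGraph V) (X : Set V) : Prop :=
  ∀ x ∈ X, ∀ y ∈ X, x ≠ y → G.Reachable x y →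
    ∃ p : G.Walk x y, p.length = G.dist x y ∧
      ∀ z ∈ p.support, z ≠ x → z ≠ y → z ∉ X

/-- An independent mutual-visibility set. -/
def IsIMVSet (G : SimpleGraph V) (X : Set V) : Prop :=
  (∀ x ∈ X, ∀ y ∈ X, ¬ G.Adj x y) ∧ IsMVSet G X

/-- The mutual-visibility chromatic number: the least `k` such that the vertex
set partitions into `k` mutual-visibility sets. -/
noncomputable def mvChrom (G : SimpleGraph V) : ℕ :=
  sInf {k | ∃ f : V → Fin k, ∀ i, IsMVSet G (f ⁻¹' {i})}

/-- The independent mutual-visibility chromatic number. -/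
noncomputable def imvChrom (G : SimpleGraph V) : ℕ :=
  sInf {k | ∃ f : V → Fin k, ∀ i, IsIMVSet G (f ⁻¹' {i})}

/-- The chromatic number, as a natural number. -/
noncomputable def chromNat (G : SimpleGraph V) : ℕ :=
  sInf {k | G.Colorable k}

/-- The independent mutual-visibility number `μᵢ(G)`. -/
noncomputable def imvNum (G : SimpleGraph V) : ℕ :=
  sSup {n | ∃ s : Finset V, IsIMVSet G ↑s ∧ s.card = n}

/-- The independence number `α(G)`. -/
noncomputable def indepNum (G : SimpleGraph V) : ℕ :=
  sSup {n | ∃ s : Finset V, (∀ x ∈ s, ∀ y ∈ s, ¬ G.Adj x y) ∧ s.card = n}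

/-- A symmetric `r`-edge-coloring of `K_n` in which no color class contains a `K₄`. -/
def IsK4FreeColoring {n r : ℕ} (c : Fin n → Fin n → Fin r) : Prop :=
  (∀ i j, c i j = c j i) ∧
  ∀ k : Fin r, ¬ ∃ a b d e : Fin n, a ≠ b ∧ a ≠ d ∧ a ≠ e ∧ b ≠ d ∧ b ≠ e ∧ d ≠ e ∧
    c a b = k ∧ c a d = k ∧ c a e = k ∧ c b d = k ∧ c b e = k ∧ c d e = k

/-- `ρ(n)`: the least number of parts in a `K₄`-free partition of `E(K_n)`. -/
noncomputable def rho (n : ℕ) : ℕ :=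
  sInf {r | ∃ c : Fin n → Fin n → Fin r, IsK4FreeColoring c}

/-- The vertex type of the subdivision graph of `K_n`: original vertices plus one
subdivision vertex for each edge (given as an ordered pair `p.1 < p.2`). -/
abbrev SubKVert (n : ℕ) := Fin n ⊕ {p : Fin n × Fin n // p.1 < p.2}

/-- The subdivision graph `S(K_n)`. -/
def subK (n : ℕ) : SimpleGraph (SubKVert n) where
  Adj a b :=
    match a, b with
    | Sum.inl i, Sum.inr e => i = e.1.1 ∨ i = e.1.2
    | Sum.inr e, Sum.inl i => i = e.1.1 ∨ i = e.1.2
    | _, _ => False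
  symm := by
    refine ⟨?_⟩
    rintro (i | e) (j | f) h <;> simp_all
  loopless := by
    refine ⟨?_⟩
    rintro (i | e) h <;> simp_all

/-!
In `S(K_n)` two original vertices are at distance 2, and two subdivision vertices are at
distance 2 or 4 according as their edges meet or not; a geodesic between disjoint edges `ab`
and `cd` runs `ab, x, xy, y, cd` with `x ∈ {a, b}` and `y ∈ {c, d}`. So two disjoint edges of
a mutual-visibility set need a crossing edge outside the set, which rules out a `K₄` among
the edges of a part: the parts of a mutual-visibility partition of `S(K_n)`, read on the
subdivision vertices, form a `K₄`-free partition of `E(K_n)`. Conversely, `K₄`-freeness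
supplies such a crossing edge in another part, so the parts of a `K₄`-free partition, together
with the set of original vertices, form an independent mutual-visibility partition.
-/

namespace SimpleGraph

variable {G : SimpleGraph V}

def Visible (G : SimpleGraph V) (X : Set V) (u v : V) : Prop :=
  ∃ p : G.Walk u v, p.length = G.dist u v ∧ ∀ z ∈ p.support, z ≠ u → z ≠ v → z ∉ X

lemma isMVSet_iff {X : Set V} :
    IsMVSet G X ↔ ∀ u ∈ X, ∀ v ∈ X, u ≠ v → G.Reachable u v → G.Visible X u v :=
  Iff.rfl

lemma dist_eq_two_of_adj_of_adj {u v w : V} (huv : u ≠ v) (hnadj : ¬G.Adj u v)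
    (huw : G.Adj u w) (hwv : G.Adj w v) : G.dist u v = 2 := by
  have h : G.edist u v = 2 :=
    edist_eq_two_iff.mpr ⟨huv, hnadj, w, G.mem_commonNeighbors.mpr ⟨huw, hwv.symm⟩⟩
  exact_mod_cast (huw.reachable.trans hwv.reachable).coe_dist_eq_edist.trans h

lemma visible_of_adj_of_adj {X : Set V} {u v w : V} (huv : u ≠ v) (hnadj : ¬G.Adj u v)
    (huw : G.Adj u w) (hwv : G.Adj w v) (hw : w ∉ X) : G.Visible X u v := by
  refine ⟨.cons huw (.cons hwv .nil), (dist_eq_two_of_adj_of_adj huv hnadj huw hwv).symm, ?_⟩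
  simp only [Walk.support_cons, Walk.support_nil, List.mem_cons, List.not_mem_nil, or_false]
  rintro z (rfl | rfl | rfl) hzu hzv
  exacts [(hzu rfl).elim, hw, (hzv rfl).elim]

lemma IsIMVSet.isMVSet {X : Set V} (hX : IsIMVSet G X) : IsMVSet G X := hX.2

lemma isIMVSet_of_subsingleton {X : Set V} (hX : X.Subsingleton) : IsIMVSet G X :=
  ⟨fun _ hx _ hy h => G.loopless.irrefl _ (hX hx hy ▸ h),
    fun _ hx _ hy hne _ => (hne (hX hx hy)).elim⟩

lemma exists_imvPartition [Finite V] (G : SimpleGraph V) :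
    ∃ k, ∃ f : V → Fin k, ∀ i, IsIMVSet G (f ⁻¹' {i}) := by
  obtain ⟨k, ⟨e⟩⟩ := Finite.exists_equiv_fin V
  exact ⟨k, e, fun i => isIMVSet_of_subsingleton
    (Set.subsingleton_singleton.preimage e.injective)⟩

lemma exists_imvPartition_imvChrom [Finite V] (G : SimpleGraph V) :
    ∃ f : V → Fin (imvChrom G), ∀ i, IsIMVSet G (f ⁻¹' {i}) :=
  Nat.sInf_mem (exists_imvPartition G)

lemma exists_mvPartition_mvChrom [Finite V] (G : SimpleGraph V) :
    ∃ f : V → Fin (mvChrom G), ∀ i, IsMVSet G (f ⁻¹' {i}) := by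
  obtain ⟨k, f, hf⟩ := exists_imvPartition G
  exact Nat.sInf_mem (s := {k | ∃ f : V → Fin k, ∀ i, IsMVSet G (f ⁻¹' {i})})
    ⟨k, f, fun i => (hf i).isMVSet⟩

lemma mvChrom_le_imvChrom [Finite V] (G : SimpleGraph V) : mvChrom G ≤ imvChrom G := by
  obtain ⟨f, hf⟩ := exists_imvPartition_imvChrom G
  exact Nat.sInf_le ⟨f, fun i => (hf i).isMVSet⟩

end SimpleGraph

open SimpleGraph

abbrev SubKEdge (n : ℕ) := {p : Fin n × Fin n // p.1 < p.2}

section SubdivisionOfComplete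

variable {n : ℕ}

@[simp] lemma subK_adj_inl_inr {x : Fin n} {e : SubKEdge n} :
    (subK n).Adj (.inl x) (.inr e) ↔ x = e.1.1 ∨ x = e.1.2 := Iff.rfl

@[simp] lemma subK_adj_inr_inl {x : Fin n} {e : SubKEdge n} :
    (subK n).Adj (.inr e) (.inl x) ↔ x = e.1.1 ∨ x = e.1.2 := Iff.rfl

@[simp] lemma subK_not_adj_inl_inl {x y : Fin n} : ¬(subK n).Adj (.inl x) (.inl y) := id

@[simp] lemma subK_not_adj_inr_inr {e f : SubKEdge n} : ¬(subK n).Adj (.inr e) (.inr f) := id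

def subKEdge (x y : Fin n) (h : x ≠ y) : SubKEdge n := ⟨(min x y, max x y), min_lt_max.mpr h⟩

@[simp] lemma subK_adj_inl_subKEdge {z x y : Fin n} (h : x ≠ y) :
    (subK n).Adj (.inl z) (.inr (subKEdge x y h)) ↔ z = x ∨ z = y := by
  rcases le_total x y with hxy | hxy <;> simp [subKEdge, hxy, or_comm]

@[simp] lemma subK_adj_subKEdge_inl {z x y : Fin n} (h : x ≠ y) :
    (subK n).Adj (.inr (subKEdge x y h)) (.inl z) ↔ z = x ∨ z = y :=
  subK_adj_inl_subKEdge h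

lemma subKEdge_comm {x y : Fin n} (h : x ≠ y) : subKEdge x y h = subKEdge y x h.symm := by
  simp [subKEdge, min_comm, max_comm]

lemma eq_subKEdge {e : SubKEdge n} {x y : Fin n} (hxy : x ≠ y)
    (hx : (subK n).Adj (.inl x) (.inr e)) (hy : (subK n).Adj (.inl y) (.inr e)) :
    e = subKEdge x y hxy := by
  obtain ⟨⟨a, b⟩, hab⟩ := e
  simp only [subK_adj_inl_inr] at hx hy
  rcases hx with rfl | rfl <;> rcases hy with rfl | rfl
  · exact (hxy rfl).elim
  · simp [subKEdge, hab.le]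
  · simp [subKEdge, hab.le]
  · exact (hxy rfl).elim

lemma apply_subKEdge {α : Type*} {c : Fin n → Fin n → α} (hc : ∀ x y, c x y = c y x)
    {x y : Fin n} (h : x ≠ y) : c (subKEdge x y h).1.1 (subKEdge x y h).1.2 = c x y := by
  rcases le_total x y with hxy | hxy
  · simp [subKEdge, hxy]
  · simp [subKEdge, hxy, hc y x]

lemma subK_ne_of_commonNeighbors_eq_empty {e f : SubKEdge n}
    (hef : (subK n).commonNeighbors (.inr e) (.inr f) = ∅) {x y : Fin n}
    (hx : (subK n).Adj (.inl x) (.inr e)) (hy : (subK n).Adj (.inl y) (.inr f)) : x ≠ y := by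
  rintro rfl
  exact Set.eq_empty_iff_forall_notMem.mp hef (.inl x)
    ((subK n).mem_commonNeighbors.mpr ⟨hx.symm, hy.symm⟩)

lemma subK_inr_ne_of_commonNeighbors_eq_empty {e f : SubKEdge n}
    (hef : (subK n).commonNeighbors (.inr e) (.inr f) = ∅) :
    (.inr e : SubKVert n) ≠ .inr f := by
  rintro ⟨⟩
  exact subK_ne_of_commonNeighbors_eq_empty hef (x := e.1.1) (by simp) (by simp) rfl

lemma even_dist_subK_inr_inr (e f : SubKEdge n) : Even ((subK n).dist (.inr e) (.inr f)) := by
  let bicoloring : (subK n).Coloring Bool :=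
    Coloring.mk Sum.isLeft (by rintro (_ | _) (_ | _) h <;> simp_all)
  by_cases h : (subK n).dist (.inr e) (.inr f) = 0
  · simp [h]
  obtain ⟨p, hp⟩ := exists_walk_of_dist_ne_zero h
  rw [← hp, bicoloring.even_length_iff_congr]
  rfl

lemma subK_dist_inr_inr_eq_four {e f : SubKEdge n}
    (hef : (subK n).commonNeighbors (.inr e) (.inr f) = ∅) :
    (subK n).dist (.inr e) (.inr f) = 4 := by
  have hne := subK_ne_of_commonNeighbors_eq_empty hef (x := e.1.1) (y := f.1.1) (by simp) (by simp)
  let p : (subK n).Walk (.inr e) (.inr f) :=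
    .cons (v := .inl e.1.1) (by simp) <| .cons ((subK_adj_inl_subKEdge hne).mpr (.inl rfl)) <|
      .cons ((subK_adj_subKEdge_inl hne).mpr (.inr rfl)) <| .cons (by simp) .nil
  have hle : (subK n).dist (.inr e) (.inr f) ≤ 4 := dist_le p |>.trans_eq rfl
  have hgt : 2 < (subK n).edist (.inr e) (.inr f) :=
    two_lt_edist_iff.mpr ⟨subK_inr_ne_of_commonNeighbors_eq_empty hef, id, hef⟩
  rw [← Reachable.coe_dist_eq_edist ⟨p⟩] at hgt
  obtain ⟨m, hm⟩ := even_dist_subK_inr_inr e f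
  norm_cast at hgt
  omega

end SubdivisionOfComplete

section Crossing

variable {n : ℕ}

lemma IsMVSet.subK_exists_crossing_notMem {X : Set (SubKVert n)} (hX : IsMVSet (subK n) X)
    {e f : SubKEdge n} (he : .inr e ∈ X) (hf : .inr f ∈ X)
    (hef : (subK n).commonNeighbors (.inr e) (.inr f) = ∅) :
    ∃ x y, ∃ hxy : x ≠ y, (subK n).Adj (.inl x) (.inr e) ∧ (subK n).Adj (.inl y) (.inr f) ∧
      (.inr (subKEdge x y hxy) : SubKVert n) ∉ X := by
  have hdist := subK_dist_inr_inr_eq_four hef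
  obtain ⟨p, hp, hpX⟩ := hX _ he _ hf (subK_inr_ne_of_commonNeighbors_eq_empty hef)
    (Reachable.of_dist_ne_zero (by omega))
  rw [hdist] at hp
  -- `p` runs `e, x, g, y, f`, and its middle vertex `g` is forced to be the edge `xy`
  have hadj (i : ℕ) (hi : i < 4) := p.adj_getVert_succ (i := i) (hp ▸ hi)
  have h₁ : (subK n).Adj (.inr e) (p.getVert 1) := by
    simpa only [zero_add, Walk.getVert_zero] using hadj 0 (by norm_num)
  have h₂ : (subK n).Adj (p.getVert 1) (p.getVert 2) := hadj 1 (by norm_num)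
  have h₃ : (subK n).Adj (p.getVert 2) (p.getVert 3) := hadj 2 (by norm_num)
  have h₄ : (subK n).Adj (p.getVert 3) (.inr f) := by
    simpa only [Nat.reduceAdd, ← hp, Walk.getVert_length] using hadj 3 (by norm_num)
  have hmid := hpX _ (p.getVert_mem_support 2)
  generalize p.getVert 1 = u at h₁ h₂
  generalize p.getVert 2 = w at h₂ h₃ hmid
  generalize p.getVert 3 = v at h₃ h₄
  cases u with
  | inr => simp at h₁
  | inl x =>
  cases v with
  | inr => simp at h₄
  | inl y =>
  cases w with
  | inl => simp at h₂
  | inr g =>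
  have hxy := subK_ne_of_commonNeighbors_eq_empty hef h₁.symm h₄
  refine ⟨x, y, hxy, h₁.symm, h₄, ?_⟩
  rw [← eq_subKEdge hxy h₂ h₃.symm]
  refine hmid ?_ ?_
  · rintro ⟨⟩
    exact subK_ne_of_commonNeighbors_eq_empty hef h₃.symm h₄ rfl
  · rintro ⟨⟩
    exact subK_ne_of_commonNeighbors_eq_empty hef h₁.symm h₂ rfl

lemma subK_isIMVSet_of_subset_range_inl {X : Set (SubKVert n)} (hX : X ⊆ Set.range Sum.inl) :
    IsIMVSet (subK n) X := by
  refine ⟨?_, isMVSet_iff.mpr ?_⟩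
  · intro u hu v hv
    obtain ⟨x, rfl⟩ := hX hu
    obtain ⟨y, rfl⟩ := hX hv
    exact subK_not_adj_inl_inl
  · intro u hu v hv huv _
    obtain ⟨x, rfl⟩ := hX hu
    obtain ⟨y, rfl⟩ := hX hv
    have hxy : x ≠ y := fun h => huv (h ▸ rfl)
    exact visible_of_adj_of_adj huv subK_not_adj_inl_inl
      ((subK_adj_inl_subKEdge hxy).mpr (.inl rfl)) ((subK_adj_subKEdge_inl hxy).mpr (.inr rfl))
      fun h => (hX h).elim fun _ h' => Sum.inl_ne_inr h'

lemma subK_isIMVSet_of_subset_range_inr {X : Set (SubKVert n)} (hX : X ⊆ Set.range Sum.inr)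
    (hcross : ∀ e f : SubKEdge n, .inr e ∈ X → .inr f ∈ X →
      (subK n).commonNeighbors (.inr e) (.inr f) = ∅ →
      ∃ x y, ∃ hxy : x ≠ y, (subK n).Adj (.inl x) (.inr e) ∧ (subK n).Adj (.inl y) (.inr f) ∧
        (.inr (subKEdge x y hxy) : SubKVert n) ∉ X) :
    IsIMVSet (subK n) X := by
  have inl_notMem (x : Fin n) : (.inl x : SubKVert n) ∉ X :=
    fun h => (hX h).elim fun _ h' => Sum.inr_ne_inl h'
  refine ⟨?_, isMVSet_iff.mpr ?_⟩
  · intro u hu v hv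
    obtain ⟨e, rfl⟩ := hX hu
    obtain ⟨f, rfl⟩ := hX hv
    exact subK_not_adj_inr_inr
  · intro u hu v hv huv _
    obtain ⟨e, rfl⟩ := hX hu
    obtain ⟨f, rfl⟩ := hX hv
    by_cases hef : (subK n).commonNeighbors (.inr e) (.inr f) = ∅
    · obtain ⟨x, y, hxy, hx, hy, hxyX⟩ := hcross e f hu hv hef
      refine ⟨.cons hx.symm <| .cons ((subK_adj_inl_subKEdge hxy).mpr (.inl rfl)) <|
        .cons ((subK_adj_subKEdge_inl hxy).mpr (.inr rfl)) <| .cons hy .nil,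
        (subK_dist_inr_inr_eq_four hef).symm, ?_⟩
      simp only [Walk.support_cons, Walk.support_nil, List.mem_cons, List.not_mem_nil, or_false]
      rintro z (rfl | rfl | rfl | rfl | rfl) hze hzf
      exacts [(hze rfl).elim, inl_notMem x, hxyX, inl_notMem y, (hzf rfl).elim]
    · obtain ⟨w, hw⟩ := Set.nonempty_iff_ne_empty.mpr hef
      rw [mem_commonNeighbors] at hw
      rcases w with x | _
      · exact visible_of_adj_of_adj huv subK_not_adj_inr_inr hw.1 hw.2.symm (inl_notMem x)
      · exact (subK_not_adj_inr_inr hw.1).elim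

end Crossing

section Colorings

variable {n r : ℕ}

lemma IsK4FreeColoring.exists_crossing_ne {c : Fin n → Fin n → Fin r} (hc : IsK4FreeColoring c)
    {e f : SubKEdge n} (hef : (subK n).commonNeighbors (.inr e) (.inr f) = ∅) {k : Fin r}
    (he : c e.1.1 e.1.2 = k) (hf : c f.1.1 f.1.2 = k) :
    ∃ x y, (subK n).Adj (.inl x) (.inr e) ∧ (subK n).Adj (.inl y) (.inr f) ∧ c x y ≠ k := by
  by_contra! h
  have hne {x y : Fin n} (hx : x = e.1.1 ∨ x = e.1.2) (hy : y = f.1.1 ∨ y = f.1.2) : x ≠ y :=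
    subK_ne_of_commonNeighbors_eq_empty hef (subK_adj_inl_inr.mpr hx) (subK_adj_inl_inr.mpr hy)
  exact hc.2 k ⟨e.1.1, e.1.2, f.1.1, f.1.2, e.2.ne, hne (.inl rfl) (.inl rfl),
    hne (.inl rfl) (.inr rfl), hne (.inr rfl) (.inl rfl), hne (.inr rfl) (.inr rfl), f.2.ne, he,
    h _ _ (by simp) (by simp), h _ _ (by simp) (by simp), h _ _ (by simp) (by simp),
    h _ _ (by simp) (by simp), hf⟩

lemma subK_exists_imvPartition {c : Fin n → Fin n → Fin r} (hc : IsK4FreeColoring c) :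
    ∃ f : SubKVert n → Fin (r + 1), ∀ i, IsIMVSet (subK n) (f ⁻¹' {i}) := by
  refine ⟨Sum.elim (fun _ => Fin.last r) (fun e => (c e.1.1 e.1.2).castSucc), fun i => ?_⟩
  induction i using Fin.lastCases with
  | last =>
    apply subK_isIMVSet_of_subset_range_inl
    rintro (x | e) he
    · exact ⟨x, rfl⟩
    · simp at he
  | cast k =>
    apply subK_isIMVSet_of_subset_range_inr
    · rintro (x | e) he
      · exact ((Fin.castSucc_lt_last k).ne he.symm).elim
      · exact ⟨e, rfl⟩
    · intro e f he hf hef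
      simp only [Set.mem_preimage, Set.mem_singleton_iff, Sum.elim_inr, Fin.castSucc_inj] at he hf
      obtain ⟨x, y, hx, hy, hxy⟩ := hc.exists_crossing_ne hef he hf
      refine ⟨x, y, subK_ne_of_commonNeighbors_eq_empty hef hx hy, hx, hy, ?_⟩
      simpa [apply_subKEdge hc.1] using hxy

lemma subK_exists_isK4FreeColoring {f : SubKVert n → Fin r}
    (hf : ∀ i, IsMVSet (subK n) (f ⁻¹' {i})) : ∃ c : Fin n → Fin n → Fin r, IsK4FreeColoring c := by
  classical
  -- the diagonal values `c x x` play no role in `IsK4FreeColoring`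
  let c (x y : Fin n) : Fin r := if h : x = y then f (.inl x) else f (.inr (subKEdge x y h))
  refine ⟨c, fun x y => ?_, ?_⟩
  · by_cases h : x = y
    · subst h; rfl
    · simp [c, h, Ne.symm h, subKEdge_comm h]
  · rintro i ⟨a, b, a', b', hab, haa', hab', hba', hbb', ha'b', h₁, h₂, h₃, h₄, h₅, h₆⟩
    simp only [c, *] at h₁ h₂ h₃ h₄ h₅ h₆
    have hdisj : (subK n).commonNeighbors (.inr (subKEdge a b hab)) (.inr (subKEdge a' b' ha'b'))
        = ∅ := by
      refine Set.eq_empty_iff_forall_notMem.mpr ?_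
      rintro (z | g) hz <;> simp only [mem_commonNeighbors] at hz
      · simp only [subK_adj_subKEdge_inl] at hz
        rcases hz with ⟨rfl | rfl, rfl | rfl⟩ <;> contradiction
      · exact subK_not_adj_inr_inr hz.1
    obtain ⟨x, y, hxy, hx, hy, hxyX⟩ := (hf i).subK_exists_crossing_notMem h₁ h₆ hdisj
    simp only [subK_adj_inl_subKEdge] at hx hy
    apply hxyX
    rcases hx with rfl | rfl <;> rcases hy with rfl | rfl
    exacts [h₂, h₃, h₄, h₅]

end Colorings

lemma exists_isK4FreeColoring_rho (n : ℕ) :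
    ∃ c : Fin n → Fin n → Fin (rho n), IsK4FreeColoring c := by
  obtain ⟨k, f, hf⟩ := exists_imvPartition (subK n)
  exact Nat.sInf_mem (s := {r | ∃ c : Fin n → Fin n → Fin r, IsK4FreeColoring c})
    ⟨k, subK_exists_isK4FreeColoring fun i => (hf i).isMVSet⟩

lemma rho_le_mvChrom_subK (n : ℕ) : rho n ≤ mvChrom (subK n) :=
  have ⟨_, hf⟩ := exists_mvPartition_mvChrom (subK n)
  Nat.sInf_le (subK_exists_isK4FreeColoring hf)

lemma imvChrom_subK_le (n : ℕ) : imvChrom (subK n) ≤ rho n + 1 :=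
  have ⟨_, hc⟩ := exists_isK4FreeColoring_rho n
  Nat.sInf_le (subK_exists_imvPartition hc)

theorem stmt2 (n : ℕ) :
    rho n ≤ mvChrom (subK n) ∧ mvChrom (subK n) ≤ imvChrom (subK n) ∧
      imvChrom (subK n) ≤ rho n + 1 :=
  ⟨rho_le_mvChrom_subK n, mvChrom_le_imvChrom (subK n), imvChrom_subK_le n⟩
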